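/- arXiv:2409.14189 — 6 statements merged into one kernel-verified Lean document; each statement's English description precedes it below -/
import Mathlib

section
/- Let σ be a nondecreasing sigmoidal function satisfying (Σ1), (Σ2), (Σ3), and let φ_σ be its density function. Then ∑_{k∈ℤ} φ_σ(x − k) = 1 for every x ∈ ℝ. -/
open Filter Topology MeasureTheory

/-- The density (kernel) function generated by a sigmoidal function. -/
noncomputable def phiFn (σ : ℝ → ℝ) (x : ℝ) : ℝ := (σ (x + 1) - σ (x - 1)) / 2

/-- σ is a (measurable) sigmoidal function. -/
def Sigmoidal (σ : ℝ → ℝ) : Prop :=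
  Measurable σ ∧ Tendsto σ atBot (𝓝 0) ∧ Tendsto σ atTop (𝓝 1)

/-- (Σ1): σ(x) - 1/2 is an odd function. -/
def Sigma1 (σ : ℝ → ℝ) : Prop := ∀ x : ℝ, σ (-x) - 1/2 = -(σ x - 1/2)

/-- (Σ2): σ ∈ C²(ℝ) and σ is concave on [0, +∞). -/
def Sigma2 (σ : ℝ → ℝ) : Prop := ContDiff ℝ 2 σ ∧ ConcaveOn ℝ (Set.Ici 0) σ

/-- (Σ3): σ(x) = O(|x|^{-α-1}) as x → -∞, with α > 0. -/
def Sigma3 (σ : ℝ → ℝ) (α : ℝ) : Prop :=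
  0 < α ∧ σ =O[atBot] fun x : ℝ => |x| ^ (-α - 1)

/-- (Σ4): σ ∈ C^m(ℝ), m ≥ 2, and for each s = 1,…,m there are constants
`K s, C s > 0` with |σ^{(s)}(x)| ≤ C s * |x|^{-β-1} for |x| ≥ K s, where β > m + 1. -/
def Sigma4 (σ : ℝ → ℝ) (m : ℕ) (β : ℝ) (K C : ℕ → ℝ) : Prop :=
  2 ≤ m ∧ (m : ℝ) + 1 < β ∧ ContDiff ℝ m σ ∧
    ∀ s : ℕ, 1 ≤ s → s ≤ m → 0 < K s ∧ 0 < C s ∧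
      ∀ x : ℝ, K s ≤ |x| → |iteratedDeriv s σ x| ≤ C s * |x| ^ (-β - 1)

/-- Algebraic moment of order ν of Φ. -/
noncomputable def algMoment (Φ : ℝ → ℝ) (ν : ℕ) (x : ℝ) : ℝ :=
  ∑' k : ℤ, Φ (x - (k : ℝ)) * ((k : ℝ) - x) ^ ν

/-- (Σ5): the algebraic moments of order j = 1,…,m of φ_σ are constants A j. -/
def Sigma5 (σ : ℝ → ℝ) (m : ℕ) (A : ℕ → ℝ) : Prop :=
  ∀ j : ℕ, 1 ≤ j → j ≤ m → ∀ x : ℝ, algMoment (phiFn σ) j x = A j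

/-- Truncated algebraic moment of order ν of Φ (associated with integers a < b). -/
noncomputable def truncMoment (Φ : ℝ → ℝ) (ν : ℕ) (a b : ℤ) (n : ℕ) (u : ℝ) : ℝ :=
  ∑ k ∈ Finset.Icc ((n : ℤ) * a) ((n : ℤ) * b), Φ (u - (k : ℝ)) * ((k : ℝ) - u) ^ ν

/-- The ν-th discrete absolute moment function of Φ (before taking sup over u). -/
noncomputable def discMoment (Φ : ℝ → ℝ) (ν : ℝ) (u : ℝ) : ℝ :=
  ∑' k : ℤ, |Φ (u - (k : ℝ))| * |u - (k : ℝ)| ^ ν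

/-- The Riemann zeta function (as a real series), ζ(p) = ∑_{i≥1} i^{-p}. -/
noncomputable def zetaR (p : ℝ) : ℝ := ∑' i : ℕ, ((i : ℝ) + 1) ^ (-p)

/-- The NN operator F_n activated by σ. -/
noncomputable def Fop (σ : ℝ → ℝ) (f : ℝ → ℝ) (a b : ℝ) (n : ℕ) (x : ℝ) : ℝ :=
  (∑ k ∈ Finset.Icc ⌈(n : ℝ) * a⌉ ⌊(n : ℝ) * b⌋, f ((k : ℝ) / n) * phiFn σ ((n : ℝ) * x - k)) /
    (∑ k ∈ Finset.Icc ⌈(n : ℝ) * a⌉ ⌊(n : ℝ) * b⌋, phiFn σ ((n : ℝ) * x - k))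

/-- The modified NN operator F̃_n (integer endpoints a < b). -/
noncomputable def Ftil (σ : ℝ → ℝ) (f : ℝ → ℝ) (a b : ℤ) (n : ℕ) (x : ℝ) : ℝ :=
  ∑ k ∈ Finset.Icc ((n : ℤ) * a) ((n : ℤ) * b), f ((k : ℝ) / n) * phiFn σ ((n : ℝ) * x - (k : ℝ))

/-- Sup-norm of g on [a,b]. -/
noncomputable def supNormOn (g : ℝ → ℝ) (a b : ℝ) : ℝ := ⨆ x : Set.Icc a b, |g x|

/-- Modulus of continuity of g on [a,b]. -/
noncomputable def modulus (g : ℝ → ℝ) (a b h : ℝ) : ℝ :=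
  sSup {y : ℝ | ∃ u ∈ Set.Icc a b, ∃ v ∈ Set.Icc a b, |u - v| ≤ h ∧ y = |g u - g v|}

/-- Discrete absolute moment (natural order ν) of Φ: sup over u of the moment series. -/
noncomputable def dmomentN (Φ : ℝ → ℝ) (ν : ℕ) : ℝ :=
  ⨆ u : ℝ, ∑' k : ℤ, |Φ (u - (k : ℝ))| * |u - (k : ℝ)| ^ ν


set_option maxHeartbeats 1000000 in
theorem partition_of_unity (σ : ℝ → ℝ) (α : ℝ) (hσ : Sigmoidal σ) (hmono : Monotone σ)
    (h1 : Sigma1 σ) (h2 : Sigma2 σ) (h3 : Sigma3 σ α) (x : ℝ) :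
    ∑' k : ℤ, phiFn σ (x - (k : ℝ)) = 1 := by
  obtain ⟨-, hbot, htop⟩ := hσ
  have hnn : ∀ y : ℝ, 0 ≤ phiFn σ y := fun y => by
    have := hmono (show y - 1 ≤ y + 1 by linarith)
    unfold phiFn; linarith
  have hlim1 : Tendsto (fun N : ℕ => σ (x - N + 1) + σ (x - N)) atTop (𝓝 0) := by
    have hN : Tendsto (fun N : ℕ => x - (N:ℝ)) atTop atBot :=
      tendsto_atBot_add_const_left _ x (tendsto_neg_atBot_iff.mpr tendsto_natCast_atTop_atTop)
    have h1 : Tendsto (fun N : ℕ => x - (N:ℝ) + 1) atTop atBot :=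
      tendsto_atBot_add_const_right _ 1 hN
    simpa using ((hbot.comp h1).add (hbot.comp hN))
  have hlim2 : Tendsto (fun N : ℕ => σ (x + N + 1) + σ (x + N)) atTop (𝓝 2) := by
    have hN : Tendsto (fun N : ℕ => x + (N:ℝ)) atTop atTop :=
      tendsto_atTop_add_const_left _ x tendsto_natCast_atTop_atTop
    have h1 : Tendsto (fun N : ℕ => x + (N:ℝ) + 1) atTop atTop :=
      tendsto_atTop_add_const_right _ 1 hN
    have := (htop.comp h1).add (htop.comp hN)
    norm_num at this
    exact this
  have hpos : HasSum (fun n : ℕ => phiFn σ (x - ((n : ℤ) : ℝ))) ((σ (x+1) + σ x)/2) := by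
    rw [hasSum_iff_tendsto_nat_of_nonneg (fun n => hnn _)]
    have key : ∀ N : ℕ, ∑ n ∈ Finset.range N, phiFn σ (x - ((n : ℤ) : ℝ))
        = ((σ (x+1) + σ x) - (σ (x - N + 1) + σ (x - N)))/2 := by
      intro N
      induction N with
      | zero => simp
      | succ N ih =>
        rw [Finset.sum_range_succ, ih]
        unfold phiFn
        push_cast
        have h1 : (x : ℝ) - (N + 1) + 1 = x - N - 1 + 1 := by ring
        rw [h1]
        ring_nf
    simp only [key]
    have hc : Tendsto (fun _ : ℕ => σ (x+1) + σ x) atTop (𝓝 (σ (x+1) + σ x)) :=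
      tendsto_const_nhds
    have := (hc.sub hlim1).div_const 2
    simpa using this
  have hneg : HasSum (fun n : ℕ => phiFn σ (x - ((-((n:ℤ) + 1) : ℤ) : ℝ)))
      (1 - (σ (x+1) + σ x)/2) := by
    rw [hasSum_iff_tendsto_nat_of_nonneg (fun n => hnn _)]
    have key : ∀ N : ℕ, ∑ n ∈ Finset.range N, phiFn σ (x - ((-((n:ℤ) + 1) : ℤ) : ℝ))
        = ((σ (x + N + 1) + σ (x + N)) - (σ (x+1) + σ x))/2 := by
      intro N
      induction N with
      | zero => simp
      | succ N ih =>
        rw [Finset.sum_range_succ, ih]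
        unfold phiFn
        push_cast
        ring_nf
    simp only [key]
    have hc : Tendsto (fun _ : ℕ => σ (x+1) + σ x) atTop (𝓝 (σ (x+1) + σ x)) :=
      tendsto_const_nhds
    have := (hlim2.sub hc).div_const 2
    have h2 : (2 - (σ (x+1) + σ x))/2 = 1 - (σ (x+1) + σ x)/2 := by ring
    rw [h2] at this
    exact this
  have := HasSum.of_nat_of_neg_add_one (f := fun k : ℤ => phiFn σ (x - (k:ℝ))) hpos hneg
  rw [this.tsum_eq]
  ring
end

section
/- Let σ be a nondecreasing sigmoidal function satisfying (Σ1), (Σ2), (Σ3), and let φ_σ be its density function. Then for every a, b ∈ ℝ with a < b, every x ∈ [a,b], and every n ∈ ℕ⁺ with ⌈na⌉ ≤ ⌊nb⌋, one has 1 ≥ ∑_{k=⌈na⌉}^{⌊nb⌋} φ_σ(nx − k) ≥ φ_σ(1) > 0. -/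
open Filter Topology MeasureTheory

/-!
With `y = n x`, `m = ⌈n a⌉`, `M = ⌊n b⌋`, the sum telescopes:
`2 ∑ φ_σ(y - k) = σ(y + 1 - m) + σ(y - m) - σ(y - M) - σ(y - M - 1) ≤ 2`, as `0 ≤ σ ≤ 1`.
Some `k ∈ [m, M]` lies within distance `1` of `y`, and `φ_σ(t) ≥ φ_σ(1)` for `|t| ≤ 1`: by (Σ1),
`2 φ_σ(t) = σ(1 + t) + σ(1 - t) - 1`, and concavity on `[0, 2]` bounds `σ(1 + t) + σ(1 - t)` below
by `σ(2) + σ(0)`. Finally `2 φ_σ(1) = σ(2) - σ(0) > 0`, since a function concave on `[0, ∞)` with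
`σ(2) ≤ σ(0)` stays below `σ(0) = 1/2` on `[2, ∞)`, contradicting `σ → 1`.
-/

open Finset

theorem Int.sum_Icc_sub_add_one {G : Type*} [AddCommGroup G] (f : ℤ → G) {m M : ℤ} (h : m ≤ M) :
    ∑ k ∈ Icc m M, (f k - f (k + 1)) = f m - f (M + 1) := by
  induction M, h using Int.leInduction with
  | base => simp
  | succ M hM ih =>
    rw [← insert_Icc_right_eq_Icc_add_one (by omega), sum_insert (by simp), ih]
    abel

theorem Int.exists_mem_Icc_ceil_floor_abs_sub_le_one {u v y : ℝ} (hu : u ≤ y) (hv : y ≤ v)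
    (huv : ⌈u⌉ ≤ ⌊v⌋) : ∃ k ∈ Icc ⌈u⌉ ⌊v⌋, |y - k| ≤ 1 := by
  have hceil : ⌈u⌉ ≤ ⌊y⌋ + 1 := (Int.ceil_mono hu).trans (Int.ceil_le_floor_add_one y)
  have hfloor : ⌊y⌋ ≤ ⌊v⌋ := Int.floor_mono hv
  refine ⟨max ⌈u⌉ ⌊y⌋, mem_Icc.2 ⟨le_max_left _ _, max_le huv hfloor⟩, abs_le.2 ⟨?_, ?_⟩⟩
  · have : ((max ⌈u⌉ ⌊y⌋ : ℤ) : ℝ) ≤ ⌊y⌋ + 1 := by exact_mod_cast max_le hceil (by omega)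
    linarith [Int.floor_le y]
  · have : (⌊y⌋ : ℝ) ≤ ((max ⌈u⌉ ⌊y⌋ : ℤ) : ℝ) := by exact_mod_cast le_max_right _ _
    linarith [Int.lt_floor_add_one y]

theorem ConcaveOn.apply_add_apply_le {E : Type*} [AddCommGroup E] [Module ℝ E] {s : Set E}
    {f : E → ℝ} (hf : ConcaveOn ℝ s f) {a b : E} (ha : a ∈ s) (hb : b ∈ s) {θ : ℝ} (hθ₀ : 0 ≤ θ)
    (hθ₁ : θ ≤ 1) : f a + f b ≤ f (θ • a + (1 - θ) • b) + f ((1 - θ) • a + θ • b) := by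
  have h₁ := hf.2 ha hb hθ₀ (sub_nonneg.2 hθ₁) (by ring)
  have h₂ := hf.2 ha hb (sub_nonneg.2 hθ₁) hθ₀ (by ring)
  simp only [smul_eq_mul] at h₁ h₂
  linarith

theorem ConcaveOn.lt_apply_of_tendsto_atTop {f : ℝ → ℝ} {a t L : ℝ} (hf : ConcaveOn ℝ (Set.Ici a) f)
    (hlim : Tendsto f atTop (𝓝 L)) (haL : f a < L) (hat : a < t) : f a < f t := by
  by_contra! hta
  have hle : ∀ z, t ≤ z → f z ≤ f t := fun z hz =>
    hf.right_le_of_le_left'' Set.self_mem_Ici (hat.le.trans hz) hat hz hta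
  have : L ≤ f t := le_of_tendsto hlim (eventually_atTop.2 ⟨t, hle⟩)
  linarith

namespace Sigma1

variable {σ : ℝ → ℝ}

theorem apply_neg (h : Sigma1 σ) (y : ℝ) : σ (-y) = 1 - σ y := by
  linarith [h y]

theorem apply_zero (h : Sigma1 σ) : σ 0 = 1 / 2 := by
  have := h.apply_neg 0
  rw [neg_zero] at this
  linarith

theorem phiFn_neg (h : Sigma1 σ) (t : ℝ) : phiFn σ (-t) = phiFn σ t := by
  simp only [phiFn, show -t + 1 = -(t - 1) by ring, show -t - 1 = -(t + 1) by ring, h.apply_neg]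
  ring

end Sigma1

section Density

variable {σ : ℝ → ℝ}

theorem phiFn_nonneg (hmono : Monotone σ) (t : ℝ) : 0 ≤ phiFn σ t := by
  have := hmono (show t - 1 ≤ t + 1 by linarith)
  unfold phiFn
  linarith

theorem sum_Icc_phiFn_sub (σ : ℝ → ℝ) (y : ℝ) {m M : ℤ} (h : m ≤ M) :
    ∑ k ∈ Icc m M, phiFn σ (y - k) = (σ (y + 1 - m) + σ (y - m) - σ (y - M) - σ (y - M - 1)) / 2 := by
  have htel := Int.sum_Icc_sub_add_one (fun k : ℤ => σ (y + 1 - k) + σ (y - k)) h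
  have hsummand (k : ℤ) : phiFn σ (y - k) =
      (σ (y + 1 - k) + σ (y - k) - (σ (y + 1 - ↑(k + 1)) + σ (y - ↑(k + 1)))) / 2 := by
    simp only [phiFn, Int.cast_add, Int.cast_one]
    ring_nf
  rw [sum_congr rfl fun k _ => hsummand k, ← sum_div, htel]
  push_cast
  ring_nf

theorem sum_Icc_phiFn_sub_le_one (hσ : Sigmoidal σ) (hmono : Monotone σ) (y : ℝ) (m M : ℤ) :
    ∑ k ∈ Icc m M, phiFn σ (y - k) ≤ 1 := by
  rcases lt_or_ge M m with hMm | hmM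
  · simp [Icc_eq_empty_of_lt hMm]
  have hle_one := hmono.ge_of_tendsto hσ.2.2
  have hnonneg := hmono.le_of_tendsto hσ.2.1
  rw [sum_Icc_phiFn_sub σ y hmM]
  linarith [hle_one (y + 1 - m), hle_one (y - m), hnonneg (y - M), hnonneg (y - M - 1)]

theorem phiFn_one_pos (htop : Tendsto σ atTop (𝓝 1)) (h1 : Sigma1 σ)
    (hconc : ConcaveOn ℝ (Set.Ici 0) σ) : 0 < phiFn σ 1 := by
  have := hconc.lt_apply_of_tendsto_atTop htop (by rw [h1.apply_zero]; norm_num) two_pos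
  norm_num [phiFn]
  linarith

theorem phiFn_one_le_of_abs_le_one (h1 : Sigma1 σ) (hconc : ConcaveOn ℝ (Set.Ici 0) σ) {t : ℝ}
    (ht : |t| ≤ 1) :
    phiFn σ 1 ≤ phiFn σ t := by
  wlog ht₀ : 0 ≤ t generalizing t
  · rw [← h1.phiFn_neg t]
    exact this (by rwa [abs_neg]) (by linarith)
  have hpair := hconc.apply_add_apply_le (a := 2) (b := 0) (by norm_num) Set.self_mem_Ici
    (θ := (1 + t) / 2) (by linarith) (by linarith [(abs_le.1 ht).2])
  have hσ := h1.apply_neg (1 - t)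
  simp only [smul_eq_mul, mul_zero, add_zero] at hpair
  norm_num [phiFn, h1.apply_zero] at hpair ⊢
  ring_nf at hpair hσ ⊢
  linarith

end Density

theorem finite_sum_bounds_general (σ : ℝ → ℝ) (hσ : Sigmoidal σ) (hmono : Monotone σ)
    (h1 : Sigma1 σ) (h2 : Sigma2 σ)
    (a b : ℝ) (x : ℝ) (hx : x ∈ Set.Icc a b)
    (n : ℕ) (hceil : ⌈(n : ℝ) * a⌉ ≤ ⌊(n : ℝ) * b⌋) :
    (∑ k ∈ Finset.Icc ⌈(n : ℝ) * a⌉ ⌊(n : ℝ) * b⌋, phiFn σ ((n : ℝ) * x - (k : ℝ))) ≤ 1 ∧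
    phiFn σ 1 ≤ (∑ k ∈ Finset.Icc ⌈(n : ℝ) * a⌉ ⌊(n : ℝ) * b⌋, phiFn σ ((n : ℝ) * x - (k : ℝ))) ∧
    0 < phiFn σ 1 := by
  obtain ⟨k, hk, hclose⟩ := Int.exists_mem_Icc_ceil_floor_abs_sub_le_one
    (mul_le_mul_of_nonneg_left hx.1 n.cast_nonneg) (mul_le_mul_of_nonneg_left hx.2 n.cast_nonneg)
    hceil
  refine ⟨sum_Icc_phiFn_sub_le_one hσ hmono _ _ _, ?_, phiFn_one_pos hσ.2.2 h1 h2.2⟩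
  calc phiFn σ 1 ≤ phiFn σ (n * x - k) := phiFn_one_le_of_abs_le_one h1 h2.2 hclose
    _ ≤ _ := single_le_sum (f := fun k : ℤ => phiFn σ (n * x - k)) (fun _ _ => phiFn_nonneg hmono _) hk

theorem finite_sum_bounds (σ : ℝ → ℝ) (α : ℝ) (hσ : Sigmoidal σ) (hmono : Monotone σ)
    (h1 : Sigma1 σ) (h2 : Sigma2 σ) (h3 : Sigma3 σ α)
    (a b : ℝ) (hab : a < b) (x : ℝ) (hx : x ∈ Set.Icc a b)
    (n : ℕ) (hn : 1 ≤ n) (hceil : ⌈(n : ℝ) * a⌉ ≤ ⌊(n : ℝ) * b⌋) :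
    (∑ k ∈ Finset.Icc ⌈(n : ℝ) * a⌉ ⌊(n : ℝ) * b⌋, phiFn σ ((n : ℝ) * x - (k : ℝ))) ≤ 1 ∧
    phiFn σ 1 ≤ (∑ k ∈ Finset.Icc ⌈(n : ℝ) * a⌉ ⌊(n : ℝ) * b⌋, phiFn σ ((n : ℝ) * x - (k : ℝ))) ∧
    0 < phiFn σ 1 :=
  finite_sum_bounds_general σ hσ hmono h1 h2 a b x hx n hceil
end

section
/- Let σ be a nondecreasing sigmoidal function satisfying (Σ1), (Σ2), (Σ3) with exponent α > 0, and let φ_σ be its density function. Then φ_σ(x) = O(|x|^{−α−1}) as x → +∞; in particular φ_σ ∈ L¹(ℝ). -/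
open Filter Topology MeasureTheory

theorem phi_decay_and_integrable (σ : ℝ → ℝ) (α : ℝ) (hσ : Sigmoidal σ) (hmono : Monotone σ)
    (h1 : Sigma1 σ) (h2 : Sigma2 σ) (h3 : Sigma3 σ α) :
    ((fun x : ℝ => phiFn σ x) =O[atTop] fun x : ℝ => |x| ^ (-α - 1)) ∧
    Integrable (phiFn σ) := by
  have hsig : ∀ x : ℝ, σ (-x) = 1 - σ x := fun x => by have := h1 x; linarith
  have h0le : ∀ x : ℝ, 0 ≤ σ x := fun x =>
    le_of_tendsto hσ.2.1 (Filter.eventually_of_mem (Iic_mem_atBot x) fun y hy => hmono hy)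
  have hphi_nonneg : ∀ x : ℝ, 0 ≤ phiFn σ x := fun x => by
    have := hmono (show x - 1 ≤ x + 1 by linarith)
    unfold phiFn; linarith
  have hphi_le : ∀ x : ℝ, phiFn σ x ≤ σ (1 - x) := fun x => by
    have h1' : σ (1 - x) = 1 - σ (x - 1) := by
      have := hsig (x - 1); simpa [show -(x-1) = 1 - x by ring] using this
    have hle1 : σ (x + 1) ≤ 1 := by
      have h2' := hsig (-(x+1)); have := h0le (-(x+1)); rw [neg_neg] at h2'; linarith
    have := h0le (1 - x)
    unfold phiFn; linarith
  have hO1 : (fun x : ℝ => phiFn σ x) =O[atTop] (fun x : ℝ => σ (1 - x)) := by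
    refine Asymptotics.IsBigO.of_bound 1 (Filter.Eventually.of_forall fun x => ?_)
    rw [one_mul, Real.norm_eq_abs, Real.norm_eq_abs, abs_of_nonneg (hphi_nonneg x),
      abs_of_nonneg (h0le _)]
    exact hphi_le x
  have htend : Tendsto (fun x : ℝ => 1 - x) atTop atBot := by
    apply tendsto_atBot_add_const_left
    exact tendsto_neg_atTop_atBot
  have hO2 : (fun x : ℝ => σ (1 - x)) =O[atTop] (fun x : ℝ => |1 - x| ^ (-α - 1)) :=
    h3.2.comp_tendsto htend
  have hO3 : (fun x : ℝ => |1 - x| ^ (-α - 1)) =O[atTop] (fun x : ℝ => |x| ^ (-α - 1)) := by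
    refine Asymptotics.IsBigO.of_bound (2 ^ (α + 1)) ?_
    filter_upwards [Filter.eventually_ge_atTop (2 : ℝ)] with x hx
    have hx0 : (0 : ℝ) < x := by linarith
    rw [Real.norm_eq_abs, Real.norm_eq_abs, abs_of_nonneg (Real.rpow_nonneg (abs_nonneg _) _),
      abs_of_nonneg (Real.rpow_nonneg (abs_nonneg _) _),
      abs_of_nonpos (show 1 - x ≤ 0 by linarith), abs_of_pos hx0]
    have hhalf : (0 : ℝ) < x / 2 := by linarith
    have hle : x / 2 ≤ -(1 - x) := by linarith
    have h1 : (-(1 - x)) ^ (-α - 1) ≤ (x / 2) ^ (-α - 1) :=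
      Real.rpow_le_rpow_of_nonpos hhalf hle (by linarith [h3.1])
    have h2 : (x / 2) ^ (-α - 1) = 2 ^ (α + 1) * x ^ (-α - 1) := by
      rw [Real.div_rpow (le_of_lt hx0) (by norm_num), show -α - 1 = -(α+1) by ring,
        Real.rpow_neg (by norm_num : (0:ℝ) ≤ 2)]
      rw [div_eq_mul_inv, inv_inv]; ring
    rw [h2] at h1; exact h1
  have hO : (fun x : ℝ => phiFn σ x) =O[atTop] (fun x : ℝ => |x| ^ (-α - 1)) :=
    (hO1.trans hO2).trans hO3
  refine ⟨hO, ?_⟩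
  have hcont : Continuous (phiFn σ) := by
    have hc := h2.1.continuous
    exact ((hc.comp (continuous_id.add continuous_const)).sub
      (hc.comp (continuous_id.sub continuous_const))).div_const 2
  have heven : ∀ x : ℝ, phiFn σ (-x) = phiFn σ x := fun x => by
    have e1 : σ (-x + 1) = 1 - σ (x - 1) := by
      have := hsig (x - 1); simpa [show -(x-1) = -x + 1 by ring] using this
    have e2 : σ (-x - 1) = 1 - σ (x + 1) := by
      have := hsig (x + 1); simpa [show -(x+1) = -x - 1 by ring] using this
    unfold phiFn; rw [e1, e2]; ring
  have hg : IntegrableAtFilter (fun x : ℝ => |x| ^ (-α - 1)) atTop volume := by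
    refine ⟨Set.Ioi 1, Ioi_mem_atTop 1, ?_⟩
    refine (integrableOn_Ioi_rpow_of_lt (a := -α - 1) (by linarith [h3.1]) one_pos).congr_fun
      (fun x hx => ?_) measurableSet_Ioi
    rw [abs_of_pos (lt_trans one_pos hx)]
  exact hcont.locallyIntegrable.integrable_of_isBigO_atTop_of_norm_isNegInvariant
    (Filter.Eventually.of_forall fun x => by simp [Function.comp, heven x]) hO hg
end

section
/- Let σ be a nondecreasing sigmoidal function satisfying (Σ1), (Σ2), (Σ3) with exponent α > 0, and let φ_σ be its density function. Then the discrete absolute moment M_ν(φ_σ) := sup_{u∈ℝ} ∑_{k∈ℤ} |φ_σ(u − k)| |u − k|^ν is finite for every real ν with 0 ≤ ν < α. -/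
open Filter Topology MeasureTheory

lemma sigmaNonneg {σ : ℝ → ℝ} (hmono : Monotone σ) (hbot : Tendsto σ atBot (𝓝 0)) (x : ℝ) :
    0 ≤ σ x :=
  le_of_tendsto hbot (eventually_atBot.2 ⟨x, fun _ hy => hmono hy⟩)

lemma sigmaLeOne {σ : ℝ → ℝ} (hmono : Monotone σ) (htop : Tendsto σ atTop (𝓝 1)) (x : ℝ) :
    σ x ≤ 1 :=
  ge_of_tendsto htop (eventually_atTop.2 ⟨x, fun _ hy => hmono hy⟩)

lemma phiEven {σ : ℝ → ℝ} (h1 : Sigma1 σ) (x : ℝ) : phiFn σ (-x) = phiFn σ x := by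
  have e1 := h1 (x - 1)
  have e2 := h1 (x + 1)
  unfold phiFn
  rw [show -x + 1 = -(x - 1) by ring, show -x - 1 = -(x + 1) by ring]
  linarith

theorem discrete_absolute_moments_finite (σ : ℝ → ℝ) (α : ℝ) (hσ : Sigmoidal σ)
    (hmono : Monotone σ) (h1 : Sigma1 σ) (h2 : Sigma2 σ) (h3 : Sigma3 σ α)
    (ν : ℝ) (hν0 : 0 ≤ ν) (hνα : ν < α) :
    (∀ u : ℝ, Summable fun k : ℤ => |phiFn σ (u - (k : ℝ))| * |u - (k : ℝ)| ^ ν) ∧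
    BddAbove (Set.range fun u : ℝ => discMoment (phiFn σ) ν u) := by
  obtain ⟨hmeas, hbot, htop⟩ := hσ
  obtain ⟨hα, hO⟩ := h3
  have hσ0 : ∀ x, 0 ≤ σ x := sigmaNonneg hmono hbot
  have hσ1 : ∀ x, σ x ≤ 1 := sigmaLeOne hmono htop
  have hφ0 : ∀ x, 0 ≤ phiFn σ x := fun x => by
    have h := hmono (show x - 1 ≤ x + 1 by linarith); unfold phiFn; linarith
  have hφh : ∀ x, phiFn σ x ≤ 1/2 := fun x => by
    have ha := hσ1 (x + 1); have hb := hσ0 (x - 1); unfold phiFn; linarith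
  obtain ⟨c, hc⟩ := hO.bound
  rw [eventually_atBot] at hc
  obtain ⟨X, hX⟩ := hc
  set N : ℕ := max 4 ⌈2 - X⌉₊ with hNdef
  have hN4 : (4 : ℝ) ≤ (N : ℝ) := by
    have h : (4 : ℕ) ≤ N := le_max_left _ _
    exact_mod_cast h
  have hNX : 2 - X ≤ (N : ℝ) := by
    refine le_trans (Nat.le_ceil _) ?_
    exact_mod_cast le_max_right 4 ⌈2 - X⌉₊
  set C1 : ℝ := |c| / 2 * 2 ^ (α + 1) with hC1
  set C2 : ℝ := C1 * 2 ^ (α + 1 - ν) with hC2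
  have hC1nn : 0 ≤ C1 := by
    have : (0:ℝ) ≤ (2:ℝ) ^ (α + 1) := Real.rpow_nonneg (by norm_num) _
    have := abs_nonneg c
    positivity
  have hC2nn : 0 ≤ C2 := by
    have : (0:ℝ) ≤ (2:ℝ) ^ (α + 1 - ν) := Real.rpow_nonneg (by norm_num) _
    positivity
  set B : ℝ := (1/2 : ℝ) * (N : ℝ) ^ ν with hB
  set G : ℤ → ℝ := fun j => if |j| < (N : ℤ) then B else C2 * |(j : ℝ)| ^ (ν - α - 1) with hG
  -- decay bound for phi
  have hφdecay : ∀ x : ℝ, 3 ≤ |x| → 1 - X ≤ |x| → phiFn σ x ≤ C1 * |x| ^ (-α - 1) := by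
    intro x h3x hXx
    have hxe : phiFn σ x = phiFn σ (-|x|) := by
      rcases le_or_gt 0 x with h | h
      · rw [abs_of_nonneg h, phiEven h1]
      · rw [abs_of_neg h, neg_neg]
    have hy1 : -|x| + 1 ≤ X := by linarith
    have hb' := hX (-|x| + 1) hy1
    have habs : |(-|x| + 1)| = |x| - 1 := by
      rw [abs_of_nonpos (by linarith)]; ring
    rw [Real.norm_eq_abs, Real.norm_eq_abs, habs] at hb'
    have hrnn : (0:ℝ) ≤ (|x| - 1) ^ (-α - 1) := Real.rpow_nonneg (by linarith) _
    rw [abs_of_nonneg (hσ0 _), abs_of_nonneg hrnn] at hb'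
    have hb2 : σ (-|x| + 1) ≤ |c| * (|x| - 1) ^ (-α - 1) :=
      hb'.trans (mul_le_mul_of_nonneg_right (le_abs_self c) hrnn)
    have hphiy : phiFn σ (-|x|) ≤ σ (-|x| + 1) / 2 := by
      have h0 := hσ0 (-|x| - 1); unfold phiFn; linarith
    have hhalf : |x| / 2 ≤ |x| - 1 := by linarith
    have hmr : (|x| - 1) ^ (-α - 1) ≤ (|x| / 2) ^ (-α - 1) :=
      Real.rpow_le_rpow_of_nonpos (by linarith) hhalf (by linarith)
    have heq : (|x| / 2) ^ (-α - 1) = 2 ^ (α + 1) * |x| ^ (-α - 1) := by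
      rw [Real.div_rpow (abs_nonneg x) (by norm_num : (0:ℝ) ≤ 2),
        show (-α - 1 : ℝ) = -(α + 1) by ring,
        Real.rpow_neg (by norm_num : (0:ℝ) ≤ 2)]
      ring_nf
      rw [inv_inv]
    have hchain : |c| * (|x| - 1) ^ (-α - 1) ≤ |c| * (|x| / 2) ^ (-α - 1) :=
      mul_le_mul_of_nonneg_left hmr (abs_nonneg c)
    calc phiFn σ x = phiFn σ (-|x|) := hxe
      _ ≤ σ (-|x| + 1) / 2 := hphiy
      _ ≤ |c| * (|x| - 1) ^ (-α - 1) / 2 := by linarith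
      _ ≤ |c| * (|x| / 2) ^ (-α - 1) / 2 := by linarith
      _ = C1 * |x| ^ (-α - 1) := by rw [heq, hC1]; ring
  -- the key pointwise bound
  have key : ∀ (u : ℝ) (k : ℤ),
      |phiFn σ (u - (k : ℝ))| * |u - (k : ℝ)| ^ ν ≤ G (k - ⌊u⌋) := by
    intro u k
    set m : ℤ := ⌊u⌋ with hm
    set j : ℤ := k - m with hj
    set x : ℝ := u - (k : ℝ) with hx
    have hfr : x + (j : ℝ) = u - (m : ℝ) := by
      rw [hj, hx]; push_cast; ring
    have hfr0 : 0 ≤ x + (j : ℝ) := by rw [hfr]; exact sub_nonneg.2 (Int.floor_le u)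
    have hfr1 : x + (j : ℝ) < 1 := by
      rw [hfr]; have := Int.lt_floor_add_one u; push_cast; linarith
    have habsxj : |x + (j : ℝ)| ≤ 1 := by rw [abs_of_nonneg hfr0]; linarith
    have hboth : -1 ≤ |x| - |(j : ℝ)| ∧ |x| - |(j : ℝ)| ≤ 1 := by
      have h := abs_abs_sub_abs_le_abs_sub x (-(j : ℝ))
      rw [abs_neg, sub_neg_eq_add] at h
      exact abs_le.mp (h.trans habsxj)
    have hcastabs : |(j : ℝ)| = ((|j| : ℤ) : ℝ) := by push_cast; ring
    show |phiFn σ x| * |x| ^ ν ≤ G j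
    by_cases hjN : |j| < (N : ℤ)
    · have hGj : G j = B := if_pos hjN
      rw [hGj]
      have hj1 : (|j| : ℤ) + 1 ≤ (N : ℤ) := Int.add_one_le_iff.mpr hjN
      have hj1r : |(j : ℝ)| + 1 ≤ (N : ℝ) := by rw [hcastabs]; exact_mod_cast hj1
      have hxN : |x| ≤ (N : ℝ) := by linarith [hboth.2]
      rw [hB]
      apply mul_le_mul
      · rw [abs_of_nonneg (hφ0 x)]; exact hφh x
      · exact Real.rpow_le_rpow (abs_nonneg x) hxN hν0
      · exact Real.rpow_nonneg (abs_nonneg x) ν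
      · norm_num
    · have hGj : G j = C2 * |(j : ℝ)| ^ (ν - α - 1) := if_neg hjN
      push_neg at hjN
      have hjR : (N : ℝ) ≤ |(j : ℝ)| := by rw [hcastabs]; exact_mod_cast hjN
      have hx3 : 3 ≤ |x| := by linarith [hboth.1]
      have hxX : 1 - X ≤ |x| := by linarith [hboth.1]
      have hxj2 : |(j : ℝ)| / 2 ≤ |x| := by linarith [hboth.1]
      have hxpos : (0:ℝ) < |x| := by linarith
      have hjpos : (0:ℝ) < |(j : ℝ)| := by linarith
      have hdec := hφdecay x hx3 hxX
      have step1 : |phiFn σ x| * |x| ^ ν ≤ C1 * |x| ^ (-α - 1) * |x| ^ ν := by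
        rw [abs_of_nonneg (hφ0 x)]
        exact mul_le_mul_of_nonneg_right hdec (Real.rpow_nonneg (abs_nonneg x) ν)
      have step2 : C1 * |x| ^ (-α - 1) * |x| ^ ν = C1 * |x| ^ (ν - α - 1) := by
        rw [mul_assoc, ← Real.rpow_add hxpos, show (-α - 1) + ν = ν - α - 1 by ring]
      have step3 : |x| ^ (ν - α - 1) ≤ (|(j : ℝ)| / 2) ^ (ν - α - 1) :=
        Real.rpow_le_rpow_of_nonpos (by positivity) hxj2 (by linarith)
      have step4 : (|(j : ℝ)| / 2) ^ (ν - α - 1) = 2 ^ (α + 1 - ν) * |(j : ℝ)| ^ (ν - α - 1) := by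
        rw [Real.div_rpow (abs_nonneg _) (by norm_num : (0:ℝ) ≤ 2),
          show (ν - α - 1 : ℝ) = -(α + 1 - ν) by ring,
          Real.rpow_neg (by norm_num : (0:ℝ) ≤ 2)]
        ring_nf
        rw [inv_inv]
      rw [hGj]
      calc |phiFn σ x| * |x| ^ ν ≤ C1 * |x| ^ (ν - α - 1) := step2 ▸ step1
        _ ≤ C1 * ((|(j : ℝ)| / 2) ^ (ν - α - 1)) := mul_le_mul_of_nonneg_left step3 hC1nn
        _ = C2 * |(j : ℝ)| ^ (ν - α - 1) := by rw [step4, hC2]; ring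
  -- summability of the majorant
  have hb1 : 1 < α + 1 - ν := by linarith
  have hsum0 : Summable (fun j : ℤ => C2 * |(j : ℝ)| ^ (ν - α - 1)) := by
    have h := Real.summable_abs_int_rpow hb1
    rw [show -(α + 1 - ν) = ν - α - 1 by ring] at h
    exact h.mul_left C2
  have hGsum : Summable G := by
    have hfin : Summable (fun j : ℤ => G j - C2 * |(j : ℝ)| ^ (ν - α - 1)) := by
      apply summable_of_ne_finset_zero (s := Finset.Ioo (-(N : ℤ)) (N : ℤ))
      intro j hjmem
      rw [Finset.mem_Ioo] at hjmem
      have hnot : ¬ |j| < (N : ℤ) := by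
        rw [abs_lt]; tauto
      simp [hG, hnot]
    have h := hfin.add hsum0
    exact h.congr (fun j => by ring)
  have hterm0 : ∀ (u : ℝ) (k : ℤ), 0 ≤ |phiFn σ (u - (k : ℝ))| * |u - (k : ℝ)| ^ ν :=
    fun u k => mul_nonneg (abs_nonneg _) (Real.rpow_nonneg (abs_nonneg _) _)
  have hshift : ∀ u : ℝ, Summable (fun k : ℤ => G (k - ⌊u⌋)) := fun u => by
    have h := (Equiv.subRight (⌊u⌋)).summable_iff (f := G)
    exact h.mpr hGsum
  have hsum : ∀ u : ℝ, Summable fun k : ℤ => |phiFn σ (u - (k : ℝ))| * |u - (k : ℝ)| ^ ν :=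
    fun u => Summable.of_nonneg_of_le (hterm0 u) (key u) (hshift u)
  refine ⟨hsum, ⟨∑' j : ℤ, G j, ?_⟩⟩
  intro y hy
  obtain ⟨u, rfl⟩ := hy
  unfold discMoment
  calc ∑' k : ℤ, |phiFn σ (u - (k : ℝ))| * |u - (k : ℝ)| ^ ν
      ≤ ∑' k : ℤ, G (k - ⌊u⌋) := Summable.tsum_le_tsum (key u) (hsum u) (hshift u)
    _ = ∑' j : ℤ, G j := (Equiv.subRight (⌊u⌋)).tsum_eq G
end

section
/- Let σ be a nondecreasing sigmoidal function satisfying (Σ1)–(Σ4), let a < b be integers, and let δ > 0 with a + δ < b − δ. Then lim_{n→+∞} m^n_0(φ_σ, nx) = 1, uniformly with respect to x ∈ I_δ := [a+δ, b−δ], where m^n_0(φ_σ, nx) = ∑_{k=na}^{nb} φ_σ(nx − k). -/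
open Filter Topology MeasureTheory

/-!
Since `φ_σ(u - k) = (σ(u - k + 1) - σ(u - k - 1)) / 2`, the sum over `k ∈ [na, nb]` telescopes to
`(σ(u - na + 1) + σ(u - na) - σ(u - nb) - σ(u - nb - 1)) / 2`. For `u = nx` with
`x ∈ [a + δ, b - δ]` the first two arguments are `≥ nδ` and the last two are `≤ -nδ`, so, σ being
monotone with values in `[0, 1]`, the sum differs from `1` by at most `(1 - σ(nδ)) + σ(-nδ)`,
a bound independent of `x` that tends to `0`.
-/

theorem Finset.sum_Icc_sub_add_two {G : Type*} [AddCommGroup G] (f : ℤ → G) {A B : ℤ}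
    (hAB : A ≤ B) :
    ∑ k ∈ Finset.Icc A B, (f k - f (k + 2)) = f A + f (A + 1) - f (B + 1) - f (B + 2) := by
  induction B, hAB using Int.leInduction with
  | base => simp only [Finset.Icc_self, Finset.sum_singleton]; abel
  | succ B hAB ih =>
    rw [← Finset.insert_Icc_right_eq_Icc_add_one (by omega),
      Finset.sum_insert (by simp), ih, show B + 1 + 1 = B + 2 by ring,
      show B + 1 + 2 = B + 2 + 1 by ring]
    abel

theorem sum_Icc_phiFn (σ : ℝ → ℝ) (u : ℝ) {A B : ℤ} (hAB : A ≤ B) :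
    ∑ k ∈ Finset.Icc A B, phiFn σ (u - k) =
      (σ (u - A + 1) + σ (u - A) - σ (u - B) - σ (u - B - 1)) / 2 := by
  have hphi : ∀ k : ℤ, phiFn σ (u - k) = (σ (u - k + 1) - σ (u - ↑(k + 2) + 1)) / 2 := by
    intro k
    simp only [phiFn]
    push_cast
    ring_nf
  simp only [hphi, ← Finset.sum_div,
    Finset.sum_Icc_sub_add_two (fun k : ℤ => σ (u - k + 1)) hAB]
  push_cast
  ring_nf

theorem Monotone.mem_Icc_of_tendsto {σ : ℝ → ℝ} (hmono : Monotone σ) {l₀ l₁ : ℝ}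
    (hbot : Tendsto σ atBot (𝓝 l₀)) (htop : Tendsto σ atTop (𝓝 l₁)) (x : ℝ) :
    σ x ∈ Set.Icc l₀ l₁ :=
  ⟨hmono.le_of_tendsto hbot x, hmono.ge_of_tendsto htop x⟩

theorem Monotone.abs_sum_Icc_phiFn_sub_one_le {σ : ℝ → ℝ} (hmono : Monotone σ)
    (hσ : ∀ x, σ x ∈ Set.Icc 0 1) {u t : ℝ} {A B : ℤ} (ht : 0 ≤ t) (hA : t ≤ u - A)
    (hB : u - B ≤ -t) :
    |∑ k ∈ Finset.Icc A B, phiFn σ (u - k) - 1| ≤ (1 - σ t) + σ (-t) := by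
  have hAB : A ≤ B := by exact_mod_cast (show (A : ℝ) ≤ B by linarith)
  rw [sum_Icc_phiFn σ u hAB]
  have h₁ := hmono (show t ≤ u - A + 1 by linarith)
  have h₂ := hmono hA
  have h₃ := hmono hB
  have h₄ := hmono (show u - B - 1 ≤ -t by linarith)
  have := (hσ (u - A + 1)).2
  have := (hσ (u - A)).2
  have := (hσ (u - B)).1
  have := (hσ (u - B - 1)).1
  rw [abs_le]
  constructor <;> linarith

theorem tendsto_one_sub_add_neg_atTop {σ : ℝ → ℝ} (hbot : Tendsto σ atBot (𝓝 0))
    (htop : Tendsto σ atTop (𝓝 1)) :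
    Tendsto (fun t => (1 - σ t) + σ (-t)) atTop (𝓝 0) := by
  simpa using (htop.const_sub 1).add (hbot.comp tendsto_neg_atTop_atBot)

theorem tendstoUniformlyOn_of_dist_le {ι α β : Type*} [PseudoMetricSpace β] {l : Filter ι}
    {F : ι → α → β} {f : α → β} {s : Set α} {u : ι → ℝ} (hu : Tendsto u l (𝓝 0))
    (h : ∀ᶠ n in l, ∀ x ∈ s, dist (f x) (F n x) ≤ u n) : TendstoUniformlyOn F f l s :=
  Metric.tendstoUniformlyOn_iff.2 fun _ hε =>
    (h.and (hu.eventually (gt_mem_nhds hε))).mono fun _ hn x hx => (hn.1 x hx).trans_lt hn.2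

theorem trunc_moment_zero_uniform_limit_general (σ : ℝ → ℝ)
    (hσ : Sigmoidal σ) (hmono : Monotone σ) (a b : ℤ)
    (δ : ℝ) (hδ : 0 < δ) :
    TendstoUniformlyOn
      (fun (n : ℕ) (x : ℝ) =>
        ∑ k ∈ Finset.Icc ((n : ℤ) * a) ((n : ℤ) * b), phiFn σ ((n : ℝ) * x - (k : ℝ)))
      (fun _ => 1) atTop (Set.Icc ((a : ℝ) + δ) ((b : ℝ) - δ)) := by
  obtain ⟨-, hbot, htop⟩ := hσ
  have hnδ : Tendsto (fun n : ℕ => (n : ℝ) * δ) atTop atTop :=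
    tendsto_natCast_atTop_atTop.atTop_mul_const hδ
  refine tendstoUniformlyOn_of_dist_le ((tendsto_one_sub_add_neg_atTop hbot htop).comp hnδ)
    (Eventually.of_forall fun n x hx => ?_)
  have hxa := mul_le_mul_of_nonneg_left hx.1 n.cast_nonneg
  have hxb := mul_le_mul_of_nonneg_left hx.2 n.cast_nonneg
  rw [dist_comm, Real.dist_eq]
  exact hmono.abs_sum_Icc_phiFn_sub_one_le (hmono.mem_Icc_of_tendsto hbot htop)
    (by positivity) (by push_cast; linarith) (by push_cast; linarith)

theorem trunc_moment_zero_uniform_limit (σ : ℝ → ℝ) (α β : ℝ) (m : ℕ) (K C : ℕ → ℝ)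
    (hσ : Sigmoidal σ) (hmono : Monotone σ) (h1 : Sigma1 σ) (h2 : Sigma2 σ) (h3 : Sigma3 σ α)
    (h4 : Sigma4 σ m β K C) (a b : ℤ) (hab : a < b)
    (δ : ℝ) (hδ : 0 < δ) (hδ2 : (a : ℝ) + δ < (b : ℝ) - δ) :
    TendstoUniformlyOn
      (fun (n : ℕ) (x : ℝ) =>
        ∑ k ∈ Finset.Icc ((n : ℤ) * a) ((n : ℤ) * b), phiFn σ ((n : ℝ) * x - (k : ℝ)))
      (fun _ => 1) atTop (Set.Icc ((a : ℝ) + δ) ((b : ℝ) - δ)) :=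
  trunc_moment_zero_uniform_limit_general σ hσ hmono a b δ hδ
end

section
/- Let σ be a nondecreasing sigmoidal function satisfying (Σ1)–(Σ5) with parameters m ≥ 2 and β > m + 1. Then for every s ∈ {1, …, m}, every j ∈ {0, …, s−1}, and every x ∈ ℝ, one has ∑_{ℓ=0}^{j} C(j,ℓ) (s)_{j−ℓ} (−1)^{j+ℓ} 𝒜_ℓ(φ_σ^{(ℓ+s−j)}, x) = 0, where 𝒜_ν(Φ, x) := ∑_{k∈ℤ} Φ(x−k)(k−x)^ν, C(j,ℓ) is the binomial coefficient, and (s)_r := s(s−1)⋯(s−r+1) is the falling factorial (with (s)_0 := 1). -/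
open Filter Topology MeasureTheory

/-!
Write `E_i(x)` for the left-hand side with `s` replaced by `i` (`momentCombination (phiFn σ) j i`)
and `c_{i,ℓ} = C(j,ℓ) (i)_{j-ℓ} (-1)^{j+ℓ}` for its coefficients. Differentiating the moment
series term by term gives `d/dx 𝒜_ℓ(g, x) = 𝒜_ℓ(g', x) - ℓ 𝒜_{ℓ-1}(g, x)`, and together with the
Pascal-type rule `c_{i+1,ℓ} = c_{i,ℓ} - (ℓ+1) c_{i,ℓ+1}` this yields `E_i' = E_{i+1}`. As
`E_0 = 𝒜_j(φ_σ, ·)`, `E_s` is the `s`-th derivative of the `j`-th moment of `φ_σ`, which is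
constant: by (Σ5) if `j ≥ 1`, and for `j = 0` because its derivative
`∑_k φ_{σ'}(x - k) = (∑_k σ'(x - k + 1) - ∑_k σ'(x - k - 1)) / 2` vanishes by reindexing.
Term-by-term differentiation is justified by the bound `|φ_σ^{(r)}(x)| ≲ (1 + |x|)^{-β-1}`
for `r ≤ m`, which follows from (Σ4).
-/

open Asymptotics

noncomputable def decayWeight (q x : ℝ) : ℝ := (1 + |x|) ^ (-q)

section decayWeight

variable {q : ℝ}

lemma decayWeight_pos (q x : ℝ) : 0 < decayWeight q x := by
  unfold decayWeight; positivity

lemma decayWeight_le_of_abs_le (hq : 0 ≤ q) {x y : ℝ} (h : |x| ≤ |y|) :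
    decayWeight q y ≤ decayWeight q x :=
  Real.rpow_le_rpow_of_nonpos (by positivity) (by linarith) (by linarith)

lemma isBigO_decayWeight_of_le {q' : ℝ} (h : q ≤ q') : decayWeight q' =O[⊤] decayWeight q :=
  isBigO_of_le _ fun x => by
    rw [Real.norm_eq_abs, Real.norm_eq_abs, abs_of_pos (decayWeight_pos _ _),
      abs_of_pos (decayWeight_pos _ _)]
    exact Real.rpow_le_rpow_of_exponent_le (by simp) (by linarith)

/-- Peetre's inequality. -/
lemma decayWeight_le_mul (hq : 0 ≤ q) (x y : ℝ) :
    decayWeight q x ≤ (1 + |x - y|) ^ q * decayWeight q y := by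
  have hy : 1 + |y| ≤ (1 + |x - y|) * (1 + |x|) := by
    nlinarith [abs_sub_abs_le_abs_sub y x, abs_sub_comm x y, abs_nonneg x, abs_nonneg (x - y)]
  have hxy : 0 < (1 + |x - y|) ^ q := by positivity
  unfold decayWeight
  rw [Real.rpow_neg (by positivity), Real.rpow_neg (by positivity)]
  calc ((1 + |x|) ^ q)⁻¹ = (1 + |x - y|) ^ q * (((1 + |x - y|) * (1 + |x|)) ^ q)⁻¹ := by
        rw [Real.mul_rpow (by positivity) (by positivity)]
        field_simp
    _ ≤ (1 + |x - y|) ^ q * ((1 + |y|) ^ q)⁻¹ := by gcongr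

lemma isBigO_decayWeight_comp_add (hq : 0 ≤ q) (c : ℝ) :
    (fun x => decayWeight q (x + c)) =O[⊤] decayWeight q :=
  isBigO_top.2 ⟨(1 + |c|) ^ q, fun x => by
    simpa [Real.norm_eq_abs, abs_of_pos (decayWeight_pos _ _)] using
      decayWeight_le_mul hq (x + c) x⟩

lemma summable_decayWeight_int_sub (hq : 1 < q) (x : ℝ) :
    Summable fun k : ℤ => decayWeight q (x - k) := by
  have hk : Summable fun k : ℤ => decayWeight q k := by
    refine (Real.summable_abs_int_rpow hq).of_norm_bounded_eventually ?_
    refine (Set.finite_singleton (0 : ℤ)).subset fun k hk => ?_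
    by_contra h0
    have h1 : (1 : ℝ) ≤ |(k : ℝ)| := by exact_mod_cast Int.one_le_abs h0
    refine hk (?_ : ‖decayWeight q k‖ ≤ |(k : ℝ)| ^ (-q))
    rw [Real.norm_eq_abs, abs_of_pos (decayWeight_pos _ _)]
    exact Real.rpow_le_rpow_of_nonpos (by linarith) (by linarith) (by linarith)
  refine (hk.mul_left ((1 + |x|) ^ q)).of_nonneg_of_le (fun k => (decayWeight_pos _ _).le)
    fun k => ?_
  simpa [decayWeight] using decayWeight_le_mul (q := q) (by linarith) (x - k) (-k)

lemma abs_rpow_neg_le_decayWeight (hq : 0 ≤ q) {x : ℝ} (hx : 1 ≤ |x|) :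
    |x| ^ (-q) ≤ 2 ^ q * decayWeight q x := by
  have h2x : |x| ^ (-q) = 2 ^ q * (2 * |x|) ^ (-q) := by
    rw [Real.mul_rpow (by norm_num) (by positivity), ← mul_assoc, ← Real.rpow_add (by norm_num),
      add_neg_cancel, Real.rpow_zero, one_mul]
  rw [h2x]
  gcongr
  exact Real.rpow_le_rpow_of_nonpos (by positivity) (by linarith) (by linarith)

lemma isBigO_decayWeight_of_continuous {f : ℝ → ℝ} (hf : Continuous f) (hq : 0 ≤ q) {R c : ℝ}
    (h : ∀ x, R ≤ |x| → |f x| ≤ c * |x| ^ (-q)) : f =O[⊤] decayWeight q := by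
  set R' := max R 1
  obtain ⟨M, hM⟩ := (isCompact_Icc (a := -R') (b := R')).exists_bound_of_continuousOn
    hf.continuousOn
  refine isBigO_top.2 ⟨max (M / decayWeight q R') (|c| * 2 ^ q), fun x => ?_⟩
  rw [Real.norm_eq_abs (decayWeight q x), abs_of_pos (decayWeight_pos q x), Real.norm_eq_abs]
  have hR' : |R'| = R' := abs_of_pos (lt_max_of_lt_right one_pos)
  by_cases hx : |x| ≤ R'
  · have hfx : |f x| ≤ M := hM x (abs_le.1 hx)
    have hM0 : 0 ≤ M / decayWeight q R' := div_nonneg ((abs_nonneg _).trans hfx)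
      (decayWeight_pos q R').le
    calc |f x| ≤ M / decayWeight q R' * decayWeight q R' := by
          rwa [div_mul_cancel₀ _ (decayWeight_pos q R').ne']
      _ ≤ M / decayWeight q R' * decayWeight q x :=
          mul_le_mul_of_nonneg_left (decayWeight_le_of_abs_le hq (hR'.symm ▸ hx)) hM0
      _ ≤ _ := mul_le_mul_of_nonneg_right (le_max_left _ _) (decayWeight_pos q x).le
  · have hRx : R' ≤ |x| := (not_le.1 hx).le
    calc |f x| ≤ c * |x| ^ (-q) := h x ((le_max_left R 1).trans hRx)
      _ ≤ |c| * (2 ^ q * decayWeight q x) := by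
          gcongr
          · exact le_abs_self c
          · exact abs_rpow_neg_le_decayWeight hq ((le_max_right R 1).trans hRx)
      _ ≤ _ := by
          rw [← mul_assoc]
          exact mul_le_mul_of_nonneg_right (le_max_right _ _) (decayWeight_pos q x).le

lemma isBigO_mul_neg_pow {g : ℝ → ℝ} (hg : g =O[⊤] decayWeight q) (ℓ : ℕ) :
    (fun y => g y * (-y) ^ ℓ) =O[⊤] decayWeight (q - ℓ) := by
  have hp : (fun y : ℝ => (-y) ^ ℓ) =O[⊤] fun y => (1 + |y|) ^ (ℓ : ℝ) :=
    isBigO_top.2 ⟨1, fun y => by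
      have hy : 0 < (1 + |y|) ^ (ℓ : ℝ) := by positivity
      rw [norm_pow, Real.norm_eq_abs, abs_neg, Real.norm_eq_abs, abs_of_pos hy, one_mul,
        Real.rpow_natCast]
      exact pow_le_pow_left₀ (abs_nonneg y) (by linarith) ℓ⟩
  refine (hg.mul hp).congr_right fun y => ?_
  rw [decayWeight, decayWeight, ← Real.rpow_add (by positivity)]
  ring_nf

lemma summable_int_comp_sub_of_isBigO {h : ℝ → ℝ} (hq : 1 < q) (hh : h =O[⊤] decayWeight q)
    (x : ℝ) : Summable fun k : ℤ => h (x - k) := by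
  obtain ⟨D, hD⟩ := isBigO_top.1 hh
  refine ((summable_decayWeight_int_sub hq x).mul_left D).of_norm_bounded fun k => ?_
  simpa [Real.norm_eq_abs, abs_of_pos (decayWeight_pos _ _)] using hD (x - k)

lemma exists_norm_le_decayWeight_of_abs_sub_le {f : ℝ → ℝ} (hq : 0 ≤ q)
    (hf : f =O[⊤] decayWeight q) :
    ∃ D, ∀ x y, |y - x| ≤ 1 → ‖f y‖ ≤ D * decayWeight q x := by
  obtain ⟨D, hD⟩ := isBigO_top.1 hf
  refine ⟨|D| * 2 ^ q, fun x y hyx => ?_⟩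
  calc ‖f y‖ ≤ |D| * decayWeight q y := by
        simpa [Real.norm_eq_abs, abs_of_pos (decayWeight_pos _ _)] using
          (hD y).trans (mul_le_mul_of_nonneg_right (le_abs_self D) (norm_nonneg _))
    _ ≤ |D| * ((1 + |y - x|) ^ q * decayWeight q x) := by
        gcongr
        exact decayWeight_le_mul hq _ _
    _ ≤ |D| * 2 ^ q * decayWeight q x := by
        rw [mul_assoc]
        gcongr
        · exact (decayWeight_pos _ _).le
        · linarith

lemma hasDerivAt_tsum_int_comp_sub {h h' : ℝ → ℝ} (hq : 1 < q) (hh : ∀ y, HasDerivAt h (h' y) y)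
    (hdec : h =O[⊤] decayWeight q) (hdec' : h' =O[⊤] decayWeight q) (x : ℝ) :
    HasDerivAt (fun z => ∑' k : ℤ, h (z - k)) (∑' k : ℤ, h' (x - k)) x := by
  obtain ⟨D, hD⟩ := exists_norm_le_decayWeight_of_abs_sub_le (by linarith) hdec'
  refine hasDerivAt_tsum_of_isPreconnected (u := fun k : ℤ => D * decayWeight q (x - k))
    ((summable_decayWeight_int_sub hq x).mul_left _) Metric.isOpen_ball
    (convex_ball x 1).isPreconnected (fun k y _ => (hh (y - k)).comp_sub_const y k)
    (fun k y hy => hD _ _ ?_) (Metric.mem_ball_self one_pos)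
    (summable_int_comp_sub_of_isBigO hq hdec x) (Metric.mem_ball_self one_pos)
  rw [sub_sub_sub_cancel_right, ← Real.dist_eq]
  exact (Metric.mem_ball.1 hy).le

end decayWeight

lemma algMoment_eq_tsum (g : ℝ → ℝ) (ℓ : ℕ) :
    algMoment g ℓ = fun x => ∑' k : ℤ, g (x - k) * (-(x - k)) ^ ℓ := by
  funext x
  simp only [algMoment, neg_sub]

lemma hasDerivAt_algMoment {g g' : ℝ → ℝ} {q : ℝ} {ℓ : ℕ} (hg : ∀ y, HasDerivAt g (g' y) y)
    (hdec : g =O[⊤] decayWeight q) (hdec' : g' =O[⊤] decayWeight q) (hℓ : (ℓ : ℝ) + 1 < q)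
    (x : ℝ) :
    HasDerivAt (algMoment g ℓ) (algMoment g' ℓ x - ℓ * algMoment g (ℓ - 1) x) x := by
  have hq : 1 < q - ℓ := by linarith
  have hH : ∀ y, HasDerivAt (fun y => g y * (-y) ^ ℓ)
      (g' y * (-y) ^ ℓ - ℓ * (g y * (-y) ^ (ℓ - 1))) y := fun y =>
    ((hg y).fun_mul ((hasDerivAt_neg y).fun_pow ℓ)).congr_deriv (by ring)
  have hdec₁ := isBigO_mul_neg_pow hdec' ℓ
  have hdec₂ : (fun y => g y * (-y) ^ (ℓ - 1)) =O[⊤] decayWeight (q - ℓ) :=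
    (isBigO_mul_neg_pow hdec (ℓ - 1)).trans <| isBigO_decayWeight_of_le <|
      sub_le_sub_left (Nat.cast_le.2 (Nat.sub_le ℓ 1)) q
  have hderiv := hasDerivAt_tsum_int_comp_sub hq hH (isBigO_mul_neg_pow hdec ℓ)
    (hdec₁.sub (hdec₂.const_mul_left _)) x
  rw [(summable_int_comp_sub_of_isBigO hq hdec₁ x).tsum_sub
    ((summable_int_comp_sub_of_isBigO hq hdec₂ x).mul_left _), tsum_mul_left] at hderiv
  simpa only [algMoment_eq_tsum] using hderiv

lemma contDiff_phiFn {σ : ℝ → ℝ} {n : WithTop ℕ∞} (hσ : ContDiff ℝ n σ) :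
    ContDiff ℝ n (phiFn σ) :=
  ((hσ.comp (contDiff_id.add contDiff_const)).sub
    (hσ.comp (contDiff_id.sub contDiff_const))).div_const 2

lemma hasDerivAt_phiFn {g g' : ℝ → ℝ} (hg : ∀ y, HasDerivAt g (g' y) y) (x : ℝ) :
    HasDerivAt (phiFn g) (phiFn g' x) x :=
  (((hg (x + 1)).comp_add_const x 1).sub ((hg (x - 1)).comp_sub_const x 1)).div_const 2

lemma iteratedDeriv_phiFn {σ : ℝ → ℝ} {r : ℕ} (hσ : ContDiff ℝ r σ) :
    iteratedDeriv r (phiFn σ) = phiFn (iteratedDeriv r σ) := by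
  have hup : ContDiff ℝ r fun x => σ (x + 1) := hσ.comp (contDiff_id.add contDiff_const)
  have hdown : ContDiff ℝ r fun x => σ (x - 1) := hσ.comp (contDiff_id.sub contDiff_const)
  funext x
  change iteratedDeriv r (fun x => (σ (x + 1) - σ (x - 1)) / 2) x = _
  rw [iteratedDeriv_div_const, iteratedDeriv_fun_sub hup.contDiffAt hdown.contDiffAt,
    iteratedDeriv_comp_add_const, iteratedDeriv_comp_sub_const, phiFn]

lemma isBigO_phiFn {g : ℝ → ℝ} {q : ℝ} (hq : 0 ≤ q) (hg : g =O[⊤] decayWeight q) :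
    phiFn g =O[⊤] decayWeight q := by
  have hshift : ∀ c : ℝ, (fun x => g (x + c)) =O[⊤] decayWeight q := fun c =>
    (hg.comp_tendsto tendsto_top).trans (isBigO_decayWeight_comp_add hq c)
  refine (((hshift 1).sub (hshift (-1))).const_mul_left (1 / 2)).congr_left fun x => ?_
  rw [phiFn, ← sub_eq_add_neg]
  ring

/-- The mean value theorem writes `phiFn g x` as a value of `g'` within distance `1` of `x`. -/
lemma isBigO_phiFn_of_deriv {g : ℝ → ℝ} {q : ℝ} (hq : 0 ≤ q) (hg : Differentiable ℝ g)
    (hg' : deriv g =O[⊤] decayWeight q) : phiFn g =O[⊤] decayWeight q := by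
  obtain ⟨D, hD⟩ := exists_norm_le_decayWeight_of_abs_sub_le hq hg'
  refine isBigO_top.2 ⟨D, fun x => ?_⟩
  obtain ⟨c, hc, hslope⟩ := exists_hasDerivAt_eq_slope g (deriv g) (by linarith : x - 1 < x + 1)
    hg.continuous.continuousOn fun y _ => (hg y).hasDerivAt
  have hφ : phiFn g x = deriv g c := by
    rw [hslope, phiFn]
    ring_nf
  rw [hφ, Real.norm_eq_abs (decayWeight q x), abs_of_pos (decayWeight_pos q x)]
  exact hD x c (abs_le.2 ⟨by linarith [hc.1], by linarith [hc.2]⟩)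

lemma tsum_phiFn_comp_int_sub {g : ℝ → ℝ} (hg : ∀ x, Summable fun k : ℤ => g (x - k)) (x : ℝ) :
    ∑' k : ℤ, phiFn g (x - k) = 0 := by
  have hup : ∑' k : ℤ, g (x - k + 1) = ∑' k : ℤ, g (x - k) := by
    simpa [sub_add] using (Equiv.subRight (1 : ℤ)).tsum_eq fun k : ℤ => g (x - k)
  have hdown : ∑' k : ℤ, g (x - k - 1) = ∑' k : ℤ, g (x - k) := by
    simpa [sub_sub] using (Equiv.addRight (1 : ℤ)).tsum_eq fun k : ℤ => g (x - k)
  have hsup : Summable fun k : ℤ => g (x - k + 1) := by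
    simpa [sub_add_eq_add_sub] using hg (x + 1)
  have hsdown : Summable fun k : ℤ => g (x - k - 1) := by
    simpa [sub_right_comm] using hg (x - 1)
  simp only [phiFn]
  rw [tsum_div_const, hsup.tsum_sub hsdown, hup, hdown, sub_self, zero_div]

namespace Sigma4

variable {σ : ℝ → ℝ} {m : ℕ} {β : ℝ} {K C : ℕ → ℝ}

lemma isBigO_iteratedDeriv (h : Sigma4 σ m β K C) {r : ℕ} (hr : 1 ≤ r) (hrm : r ≤ m) :
    iteratedDeriv r σ =O[⊤] decayWeight (β + 1) := by
  obtain ⟨-, hβ, hσ, hKC⟩ := h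
  obtain ⟨-, -, hbound⟩ := hKC r hr hrm
  refine isBigO_decayWeight_of_continuous (R := K r) (c := C r)
    (hσ.continuous_iteratedDeriv r (by exact_mod_cast hrm))
    (by linarith [m.cast_nonneg (α := ℝ)]) fun x hx => ?_
  simpa only [neg_add'] using hbound x hx

lemma isBigO_iteratedDeriv_phiFn (h : Sigma4 σ m β K C) {r : ℕ} (hrm : r ≤ m) :
    iteratedDeriv r (phiFn σ) =O[⊤] decayWeight (β + 1) := by
  have ⟨hm, hβ, hσ, _⟩ := h
  have hq : 0 ≤ β + 1 := by linarith [m.cast_nonneg (α := ℝ)]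
  rcases Nat.eq_zero_or_pos r with rfl | hr
  · rw [iteratedDeriv_zero]
    refine isBigO_phiFn_of_deriv hq (hσ.differentiable (by norm_cast; omega)) ?_
    simpa only [iteratedDeriv_one] using h.isBigO_iteratedDeriv le_rfl (by omega)
  · rw [iteratedDeriv_phiFn (hσ.of_le (by exact_mod_cast hrm))]
    exact isBigO_phiFn hq (h.isBigO_iteratedDeriv hr hrm)

lemma algMoment_phiFn_zero_eq (h : Sigma4 σ m β K C) (x y : ℝ) :
    algMoment (phiFn σ) 0 x = algMoment (phiFn σ) 0 y := by
  have ⟨hm, hβ, hσ, _⟩ := h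
  have hq : 1 < β + 1 := by linarith [m.cast_nonneg (α := ℝ)]
  have hσ₁ : Differentiable ℝ σ := hσ.differentiable (by norm_cast; omega)
  have hσ' : deriv σ =O[⊤] decayWeight (β + 1) := by
    simpa only [iteratedDeriv_one] using h.isBigO_iteratedDeriv le_rfl (by omega)
  have hderiv : ∀ z, HasDerivAt (algMoment (phiFn σ) 0) 0 z := fun z => by
    have hz := hasDerivAt_algMoment (ℓ := 0) (hasDerivAt_phiFn fun y => (hσ₁ y).hasDerivAt)
      (by simpa only [iteratedDeriv_zero] using h.isBigO_iteratedDeriv_phiFn m.zero_le)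
      (isBigO_phiFn (by linarith) hσ') (by rwa [Nat.cast_zero, zero_add]) z
    simpa [algMoment, tsum_phiFn_comp_int_sub (summable_int_comp_sub_of_isBigO hq hσ')] using hz
  exact is_const_of_deriv_eq_zero (fun z => (hderiv z).differentiableAt) (fun z => (hderiv z).deriv)
    x y

end Sigma4

lemma Nat.succ_descFactorial_succ_eq_add (i n : ℕ) :
    (i + 1).descFactorial (n + 1) = i.descFactorial (n + 1) + (n + 1) * i.descFactorial n := by
  rw [Nat.succ_descFactorial_succ, Nat.descFactorial_succ]
  rcases le_or_gt n i with hni | hin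
  · rw [show i + 1 = i - n + (n + 1) by omega, add_mul]
  · simp [Nat.descFactorial_eq_zero_iff_lt.2 hin]

noncomputable def momentCoeff (j i ℓ : ℕ) : ℝ :=
  (j.choose ℓ : ℝ) * (i.descFactorial (j - ℓ) : ℝ) * (-1 : ℝ) ^ (j + ℓ)

lemma momentCoeff_succ (j i ℓ : ℕ) :
    momentCoeff j (i + 1) ℓ = momentCoeff j i ℓ - (ℓ + 1) * momentCoeff j i (ℓ + 1) := by
  rcases le_or_gt j ℓ with hjℓ | hℓj
  · simp [momentCoeff, Nat.sub_eq_zero_of_le hjℓ, Nat.choose_eq_zero_of_lt (Nat.lt_succ_of_le hjℓ)]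
  obtain ⟨n, hn⟩ : ∃ n, j - ℓ = n + 1 := ⟨j - ℓ - 1, by omega⟩
  have hchoose : (ℓ + 1) * j.choose (ℓ + 1) = (n + 1) * j.choose ℓ := by
    rw [mul_comm, Nat.choose_succ_right_eq, hn, mul_comm]
  have hchoose' : ((ℓ : ℝ) + 1) * j.choose (ℓ + 1) = (n + 1) * j.choose ℓ := by
    exact_mod_cast hchoose
  have hdesc : ((i + 1).descFactorial (n + 1) : ℝ) =
      i.descFactorial (n + 1) + (n + 1) * i.descFactorial n := by
    exact_mod_cast Nat.succ_descFactorial_succ_eq_add i n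
  simp only [momentCoeff, hn, show j - (ℓ + 1) = n by omega, hdesc]
  linear_combination -(i.descFactorial n : ℝ) * (-1) ^ (j + ℓ) * hchoose'

lemma sum_momentCoeff_mul_sub {j : ℕ} (i : ℕ) {a b : ℕ → ℝ} (hab : ∀ t < j, b (t + 1) = a t) :
    ∑ ℓ ∈ Finset.range (j + 1), momentCoeff j i ℓ * (a ℓ - ℓ * b ℓ) =
      ∑ ℓ ∈ Finset.range (j + 1), momentCoeff j (i + 1) ℓ * a ℓ := by
  have hshift : ∑ ℓ ∈ Finset.range (j + 1), momentCoeff j i ℓ * (ℓ * b ℓ) =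
      ∑ ℓ ∈ Finset.range (j + 1), (ℓ + 1) * momentCoeff j i (ℓ + 1) * a ℓ := by
    have hlast : momentCoeff j i (j + 1) = 0 := by simp [momentCoeff]
    rw [Finset.sum_range_succ', Finset.sum_range_succ _ j, hlast]
    simp only [Nat.cast_zero, zero_mul, mul_zero, add_zero, Nat.cast_add, Nat.cast_one]
    refine Finset.sum_congr rfl fun t ht => ?_
    rw [hab t (Finset.mem_range.1 ht)]
    ring
  simp only [mul_sub, Finset.sum_sub_distrib, hshift]
  rw [← Finset.sum_sub_distrib]
  exact Finset.sum_congr rfl fun ℓ _ => by rw [momentCoeff_succ]; ring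

noncomputable def momentCombination (Φ : ℝ → ℝ) (j i : ℕ) (x : ℝ) : ℝ :=
  ∑ ℓ ∈ Finset.range (j + 1), momentCoeff j i ℓ * algMoment (iteratedDeriv (ℓ + i - j) Φ) ℓ x

section momentCombination

variable {Φ : ℝ → ℝ} {n : ℕ} {q : ℝ} {j : ℕ}

lemma momentCombination_zero (Φ : ℝ → ℝ) (j : ℕ) :
    momentCombination Φ j 0 = algMoment Φ j := by
  funext x
  rw [momentCombination, Finset.sum_range_succ, Finset.sum_eq_zero fun ℓ hℓ => ?_]
  · simp [momentCoeff, ← two_mul, pow_mul]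
  · have : j - ℓ ≠ 0 := by have := Finset.mem_range.1 hℓ; omega
    simp [momentCoeff, Nat.descFactorial_eq_zero_iff_lt.2 (Nat.pos_of_ne_zero this)]

lemma hasDerivAt_momentCombination (hΦ : ContDiff ℝ n Φ)
    (hdec : ∀ r ≤ n, iteratedDeriv r Φ =O[⊤] decayWeight q) (hj : (j : ℝ) + 1 < q) {i : ℕ}
    (hi : i < n) (x : ℝ) :
    HasDerivAt (momentCombination Φ j i) (momentCombination Φ j (i + 1) x) x := by
  have hterm : ∀ ℓ ∈ Finset.range (j + 1), HasDerivAt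
      (fun x => momentCoeff j i ℓ * algMoment (iteratedDeriv (ℓ + i - j) Φ) ℓ x)
      (momentCoeff j i ℓ * (algMoment (iteratedDeriv (ℓ + (i + 1) - j) Φ) ℓ x
        - ℓ * algMoment (iteratedDeriv (ℓ + i - j) Φ) (ℓ - 1) x)) x := by
    intro ℓ hℓ
    have hℓj : ℓ ≤ j := Nat.lt_succ_iff.1 (Finset.mem_range.1 hℓ)
    by_cases hjℓ : j - ℓ ≤ i
    · have hr : ℓ + i - j < n := by omega
      rw [show ℓ + (i + 1) - j = ℓ + i - j + 1 by omega]
      refine (hasDerivAt_algMoment (fun y => ?_) (hdec _ hr.le) (hdec _ hr)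
        (by linarith [(Nat.cast_le (α := ℝ)).2 hℓj]) x).const_mul _
      rw [iteratedDeriv_succ]
      exact ((hΦ.differentiable_iteratedDeriv _ (by exact_mod_cast hr)) y).hasDerivAt
    · have hzero : momentCoeff j i ℓ = 0 := by
        simp [momentCoeff, Nat.descFactorial_eq_zero_iff_lt.2 (not_le.1 hjℓ)]
      simpa only [hzero, zero_mul] using hasDerivAt_const x (0 : ℝ)
  have hsum := HasDerivAt.fun_sum hterm
  rwa [sum_momentCoeff_mul_sub i fun t _ => by
    rw [Nat.add_sub_cancel, show t + 1 + i - j = t + (i + 1) - j by omega]] at hsum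

lemma iteratedDeriv_algMoment (hΦ : ContDiff ℝ n Φ)
    (hdec : ∀ r ≤ n, iteratedDeriv r Φ =O[⊤] decayWeight q) (hj : (j : ℝ) + 1 < q) {i : ℕ}
    (hi : i ≤ n) : iteratedDeriv i (algMoment Φ j) = momentCombination Φ j i := by
  induction i with
  | zero => rw [iteratedDeriv_zero, momentCombination_zero]
  | succ i ih =>
    rw [iteratedDeriv_succ, ih (by omega)]
    funext x
    exact (hasDerivAt_momentCombination hΦ hdec hj (by omega) x).deriv

end momentCombination

theorem moment_recursion_identity_general (σ : ℝ → ℝ) (β : ℝ) (m : ℕ) (K C : ℕ → ℝ) (A : ℕ → ℝ)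
    (h4 : Sigma4 σ m β K C) (h5 : Sigma5 σ m A)
    (s : ℕ) (hs1 : 1 ≤ s) (hsm : s ≤ m) (j : ℕ) (hj : j < s) (x : ℝ) :
    ∑ ℓ ∈ Finset.range (j + 1),
      (j.choose ℓ : ℝ) * (Nat.descFactorial s (j - ℓ) : ℝ) * (-1 : ℝ) ^ (j + ℓ) *
        algMoment (iteratedDeriv (ℓ + s - j) (phiFn σ)) ℓ x = 0 := by
  have ⟨_, hβ, hσ, _⟩ := h4
  have hq : (j : ℝ) + 1 < β + 1 := by
    have : (j : ℝ) < m := by exact_mod_cast hj.trans_le hsm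
    linarith
  have hconst : algMoment (phiFn σ) j = fun _ => algMoment (phiFn σ) j 0 := by
    funext y
    rcases Nat.eq_zero_or_pos j with rfl | hj0
    · exact h4.algMoment_phiFn_zero_eq y 0
    · rw [h5 j hj0 (by omega) y, h5 j hj0 (by omega) 0]
  have h := congrFun (iteratedDeriv_algMoment (contDiff_phiFn hσ)
    (fun r hr => h4.isBigO_iteratedDeriv_phiFn hr) hq hsm) x
  rw [hconst, iteratedDeriv_const, if_neg (by omega)] at h
  exact h.symm

theorem moment_recursion_identity (σ : ℝ → ℝ) (α β : ℝ) (m : ℕ) (K C : ℕ → ℝ) (A : ℕ → ℝ)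
    (hσ : Sigmoidal σ) (hmono : Monotone σ) (h1 : Sigma1 σ) (h2 : Sigma2 σ) (h3 : Sigma3 σ α)
    (h4 : Sigma4 σ m β K C) (h5 : Sigma5 σ m A)
    (s : ℕ) (hs1 : 1 ≤ s) (hsm : s ≤ m) (j : ℕ) (hj : j < s) (x : ℝ) :
    ∑ ℓ ∈ Finset.range (j + 1),
      (j.choose ℓ : ℝ) * (Nat.descFactorial s (j - ℓ) : ℝ) * (-1 : ℝ) ^ (j + ℓ) *
        algMoment (iteratedDeriv (ℓ + s - j) (phiFn σ)) ℓ x = 0 :=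
  moment_recursion_identity_general σ β m K C A h4 h5 s hs1 hsm j hj x
end
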